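/- Let H be a complex Hilbert space, B its open unit ball, τ ∈ H a unit vector, f : B → H a ρ-monotone mapping with strong radial limit lim_{r→1⁻} f(rτ) = 0, and let {F_t}_{t≥0} be a flow on B generated by f. Then the following are equivalent: (I) limsup_{r→1⁻} Re⟨f(rτ), τ⟩/(r−1) > −∞; (II) α := lim_{r→1⁻} Re⟨f(rτ), τ⟩/(r−1) exists finitely; (III) β := inf_{x∈B} 2 Re⟨f(x), x*⟩ > −∞; (IV) there exists γ ∈ ℝ such that d_τ(F_t(x)) ≤ exp(−tγ) · d_τ(x) for all x ∈ B and t ≥ 0. Moreover, when these hold, α = β and β is the maximal γ for which the inequality in (IV) holds. -/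

import Mathlib

open Filter Metric Topology

/-- The normalized support functional `x* = x/(1-‖x‖²) - τ/(1-⟨τ,x⟩)`,
where the inner product `⟨·,·⟩` of the paper is linear in the first variable,
i.e. `⟨a,b⟩ = inner b a` in Mathlib's convention. -/
noncomputable def xstar {H : Type*} [NormedAddCommGroup H] [InnerProductSpace ℂ H]
    (τ x : H) : H :=
  ((1 - (‖x‖ : ℂ) ^ 2)⁻¹) • x - ((1 - (inner ℂ x τ : ℂ))⁻¹) • τ

/-- The non-Euclidean "distance" `d_τ(x) = |1 - ⟨x,τ⟩|² / (1 - ‖x‖²)`. -/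
noncomputable def dtau {H : Type*} [NormedAddCommGroup H] [InnerProductSpace ℂ H]
    (τ x : H) : ℝ :=
  ‖(1 : ℂ) - (inner ℂ τ x : ℂ)‖ ^ 2 / (1 - ‖x‖ ^ 2)

/-- `f` is hyperbolically monotone (ρ-monotone) on the open unit ball. -/
def RhoMonotone {H : Type*} [NormedAddCommGroup H] [InnerProductSpace ℂ H]
    (f : H → H) : Prop :=
  ∀ x ∈ ball (0 : H) 1, ∀ y ∈ ball (0 : H) 1,
    (((inner ℂ y (f x) : ℂ) + (inner ℂ (f y) x : ℂ)) / (1 - (inner ℂ y x : ℂ))).re ≤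
      ((inner ℂ x (f x) : ℂ) / (1 - (‖x‖ : ℂ) ^ 2)
        + (inner ℂ (f y) y : ℂ) / (1 - (‖y‖ : ℂ) ^ 2)).re

/-- The radial difference quotient `Re⟨f(rτ),τ⟩ / (r - 1)`. -/
noncomputable def radQuot {H : Type*} [NormedAddCommGroup H] [InnerProductSpace ℂ H]
    (τ : H) (f : H → H) (r : ℝ) : ℝ :=
  (inner ℂ τ (f ((r : ℂ) • τ)) : ℂ).re / (r - 1)

/-- `β = inf_{x ∈ B} 2 Re⟨f(x), x*⟩`, as an extended real number. -/
noncomputable def betaInf {H : Type*} [NormedAddCommGroup H] [InnerProductSpace ℂ H]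
    (τ : H) (f : H → H) : EReal :=
  ⨅ x ∈ ball (0 : H) 1, ((2 * (inner ℂ (xstar τ x) (f x) : ℂ).re : ℝ) : EReal)

/-!
Along the flow, `d_τ(F_t x)` has logarithmic derivative `-2 Re⟨f, x*⟩` at `F_t x`. Hence the
estimate in (IV) holds with rate `γ` exactly when `γ` is a lower bound of `2 Re⟨f(x), x*⟩` on the
ball: Grönwall's inequality gives one direction, differentiating at `t = 0` the other.

On the radius, `2 Re⟨f(rτ), (rτ)*⟩ = -2 g(r)` and `Re⟨f(rτ), τ⟩/(r - 1) = -(1 + r) g(r)` with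
`g(r) = Re⟨f(rτ), τ⟩/(1 - r²)`, and ρ-monotonicity for the pair `(sτ, rτ)` makes `g`
nondecreasing. If `g → ∞` as `r → 1⁻`, all four conditions fail. If `g → L`, then
ρ-monotonicity for the pair `(x, rτ)` with `r → 1⁻` (where `f(rτ) → 0`) gives
`2 Re⟨f(x), x*⟩ ≥ -2L` on the whole ball, so `-2L` is at once `α`, `β` and the best `γ`.
-/

open Set

lemma one_sub_sq_norm_pos {E : Type*} [SeminormedAddCommGroup E] {x : E}
    (hx : x ∈ ball (0 : E) 1) : 0 < 1 - ‖x‖ ^ 2 := by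
  rw [mem_ball_zero_iff] at hx
  nlinarith [norm_nonneg x]

lemma div_one_sub_sq_le_div_one_sub_sq {a b r s : ℝ} (hr : |r| < 1) (hs : |s| < 1) (hsr : s < r)
    (h : (r * a + s * b) / (1 - r * s) ≤ s * a / (1 - s ^ 2) + r * b / (1 - r ^ 2)) :
    a / (1 - s ^ 2) ≤ b / (1 - r ^ 2) := by
  obtain ⟨hr₁, hr₂⟩ := abs_lt.1 hr
  obtain ⟨hs₁, hs₂⟩ := abs_lt.1 hs
  have hr' : 1 - r ^ 2 ≠ 0 := by nlinarith
  have hs' : 1 - s ^ 2 ≠ 0 := by nlinarith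
  have hrs : 0 < 1 - s * r := by nlinarith
  have key : s * a / (1 - s ^ 2) + r * b / (1 - r ^ 2) - (r * a + s * b) / (1 - r * s) =
      (r - s) / (1 - s * r) * (b / (1 - r ^ 2) - a / (1 - s ^ 2)) := by
    rw [mul_comm r s]
    field_simp
    ring
  have := sub_nonneg.2 h
  rw [key] at this
  exact sub_nonneg.1 (nonneg_of_mul_nonneg_right this (div_pos (by linarith) hrs))

lemma eventually_abs_lt_one_nhdsLT : ∀ᶠ r in 𝓝[<] (1 : ℝ), |r| < 1 := by
  filter_upwards [Ioo_mem_nhdsLT (neg_lt_self one_pos)] with r hr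
  exact abs_lt.2 hr

lemma tendsto_one_add_nhdsLT_one : Tendsto (fun r : ℝ => 1 + r) (𝓝[<] 1) (𝓝 2) :=
  ((continuous_const.add continuous_id).tendsto' 1 2 one_add_one_eq_two).mono_left
    nhdsWithin_le_nhds

lemma MonotoneOn.tendsto_nhdsLT_or_tendsto_atTop {g : ℝ → ℝ} {a b : ℝ} (hab : a < b)
    (hg : MonotoneOn g (Ioo a b)) :
    (∃ L, Tendsto g (𝓝[<] b) (𝓝 L)) ∨ Tendsto g (𝓝[<] b) atTop := by
  by_cases hbdd : BddAbove (g '' Ioo a b)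
  · exact .inl ⟨_, hg.tendsto_nhdsWithin_Ioo_left (nonempty_Ioo.2 hab) hbdd⟩
  refine .inr (tendsto_atTop.2 fun M => ?_)
  obtain ⟨_, ⟨r, hr, rfl⟩, hM⟩ := not_bddAbove_iff.1 hbdd M
  filter_upwards [Ioo_mem_nhdsLT hr.2] with s hs
  exact hM.le.trans (hg hr ⟨hr.1.trans hs.1, hs.2⟩ hs.1.le)

lemma EReal.iInf₂_coe_eq_of_isGLB {ι : Type*} {s : Set ι} {φ : ι → ℝ} {a : ℝ}
    (h : IsGLB (φ '' s) a) : ⨅ i ∈ s, (φ i : EReal) = a := by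
  refine le_antisymm (le_of_forall_gt_imp_ge_of_dense fun c hc => ?_)
    (le_iInf₂ fun i hi => EReal.coe_le_coe (h.1 (mem_image_of_mem φ hi)))
  obtain ⟨b, hab, hbc⟩ := EReal.lt_iff_exists_real_btwn.1 hc
  obtain ⟨_, ⟨i, hi, rfl⟩, -, hlt⟩ := h.exists_between (EReal.coe_lt_coe_iff.1 hab)
  exact (iInf₂_le i hi).trans ((EReal.coe_le_coe hlt.le).trans hbc.le)

lemma EReal.iInf₂_coe_eq_bot_of_not_bddBelow {ι : Type*} {s : Set ι} {φ : ι → ℝ}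
    (h : ¬BddBelow (φ '' s)) : ⨅ i ∈ s, (φ i : EReal) = ⊥ := by
  refine (EReal.eq_bot_iff_forall_lt _).2 fun y => ?_
  obtain ⟨_, ⟨i, hi, rfl⟩, hlt⟩ := not_bddBelow_iff.1 h y
  exact (iInf₂_le i hi).trans_lt (EReal.coe_lt_coe_iff.2 hlt)

lemma HasDerivWithinAt.nonneg_of_isMinOn {ψ : ℝ → ℝ} {ψ' a : ℝ}
    (h : HasDerivWithinAt ψ ψ' (Ici a) a) (hmin : IsMinOn ψ (Ici a) a) : 0 ≤ ψ' := by
  simpa using hmin.localize.hasFDerivWithinAt_nonneg h.hasFDerivWithinAt (y := 1)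
    (mem_posTangentConeAt_of_segment_subset (by simpa using Icc_subset_Ici_self))

section
variable {H : Type*} [NormedAddCommGroup H] [InnerProductSpace ℂ H]

noncomputable def dtauRate (τ : H) (f : H → H) (x : H) : ℝ :=
  2 * (inner ℂ (xstar τ x) (f x)).re

noncomputable def radialRatio (τ : H) (f : H → H) (r : ℝ) : ℝ :=
  (inner ℂ τ (f ((r : ℂ) • τ))).re / (1 - r ^ 2)

variable {τ : H} {f : H → H} {F : ℝ → H → H}

lemma one_sub_inner_ne_zero {x : H} (hτ : ‖τ‖ = 1) (hx : x ∈ ball (0 : H) 1) :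
    (1 : ℂ) - inner ℂ τ x ≠ 0 := by
  refine sub_ne_zero.2 fun h => ?_
  have := (norm_inner_le_norm (𝕜 := ℂ) τ x).trans_lt (by simpa [hτ] using hx)
  rw [← h, norm_one] at this
  exact lt_irrefl _ this

lemma dtau_pos {x : H} (hτ : ‖τ‖ = 1) (hx : x ∈ ball (0 : H) 1) : 0 < dtau τ x :=
  div_pos (pow_pos (norm_pos_iff.2 (one_sub_inner_ne_zero hτ hx)) 2) (one_sub_sq_norm_pos hx)

lemma re_inner_xstar (x w : H) :
    (inner ℂ (xstar τ x) w).re =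
      (inner ℂ x w).re / (1 - ‖x‖ ^ 2) - (inner ℂ τ w / (1 - inner ℂ τ x)).re := by
  have h : (1 : ℂ) - (‖x‖ : ℂ) ^ 2 = ((1 - ‖x‖ ^ 2 : ℝ) : ℂ) := by push_cast; ring
  simp only [xstar, inner_sub_left, inner_smul_left, map_inv₀, map_sub, map_one, inner_conj_symm,
    h, Complex.conj_ofReal, Complex.sub_re, div_eq_inv_mul, ← Complex.ofReal_inv,
    Complex.re_ofReal_mul]

lemma norm_ofReal_smul_of_norm_eq_one (hτ : ‖τ‖ = 1) (r : ℝ) :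
    ‖(r : ℂ) • τ‖ = |r| := by
  rw [norm_smul, hτ, mul_one, Complex.norm_real, Real.norm_eq_abs]

lemma one_sub_sq_norm_ofReal_smul (hτ : ‖τ‖ = 1) (r : ℝ) :
    (1 : ℂ) - (‖(r : ℂ) • τ‖ : ℂ) ^ 2 = ((1 - r ^ 2 : ℝ) : ℂ) := by
  rw [norm_ofReal_smul_of_norm_eq_one hτ, ← Complex.ofReal_pow, sq_abs]; push_cast; ring

lemma ofReal_smul_mem_ball (hτ : ‖τ‖ = 1) {r : ℝ} (hr : |r| < 1) :
    (r : ℂ) • τ ∈ ball (0 : H) 1 := by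
  rwa [mem_ball_zero_iff, norm_ofReal_smul_of_norm_eq_one hτ]

lemma inner_ofReal_smul_self (hτ : ‖τ‖ = 1) (r : ℝ) :
    inner ℂ τ ((r : ℂ) • τ) = r := by
  simp [inner_self_eq_norm_sq_to_K, hτ]

lemma dtauRate_ofReal_smul (hτ : ‖τ‖ = 1) {r : ℝ} (hr : |r| < 1) :
    dtauRate τ f ((r : ℂ) • τ) = -(2 * radialRatio τ f r) := by
  obtain ⟨hr₁, hr₂⟩ := abs_lt.1 hr
  have h1 : (1 : ℂ) - inner ℂ τ ((r : ℂ) • τ) = ((1 - r : ℝ) : ℂ) := by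
    rw [inner_ofReal_smul_self hτ]; push_cast; ring
  have h2 : (1 : ℝ) - r ≠ 0 := by linarith
  have h3 : (1 : ℝ) - r ^ 2 ≠ 0 := by nlinarith
  rw [dtauRate, radialRatio, re_inner_xstar, h1, inner_smul_left, Complex.conj_ofReal,
    Complex.re_ofReal_mul, Complex.div_ofReal_re, norm_ofReal_smul_of_norm_eq_one hτ, sq_abs]
  field_simp
  ring

lemma dtauRate_ofReal_smul_eventuallyEq (hτ : ‖τ‖ = 1) :
    (fun r : ℝ => dtauRate τ f ((r : ℂ) • τ)) =ᶠ[𝓝[<] 1]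
      fun r => -(2 * radialRatio τ f r) := by
  filter_upwards [eventually_abs_lt_one_nhdsLT] with r hr
  exact dtauRate_ofReal_smul hτ hr

lemma radQuot_eq_neg_mul_radialRatio {r : ℝ} (hr : |r| < 1) :
    radQuot τ f r = -((1 + r) * radialRatio τ f r) := by
  obtain ⟨hr₁, hr₂⟩ := abs_lt.1 hr
  have h2 : r - 1 ≠ 0 := by linarith
  have h3 : (1 : ℝ) - r ^ 2 ≠ 0 := by nlinarith
  rw [radQuot, radialRatio]
  field_simp
  ring

lemma radQuot_eventuallyEq :
    radQuot τ f =ᶠ[𝓝[<] 1] fun r => -((1 + r) * radialRatio τ f r) := by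
  filter_upwards [eventually_abs_lt_one_nhdsLT] with r hr
  exact radQuot_eq_neg_mul_radialRatio hr

lemma tendsto_radQuot_of_tendsto_radialRatio {L : ℝ}
    (hL : Tendsto (radialRatio τ f) (𝓝[<] 1) (𝓝 L)) :
    Tendsto (radQuot τ f) (𝓝[<] 1) (𝓝 (-(2 * L))) :=
  (tendsto_one_add_nhdsLT_one.mul hL).neg.congr' radQuot_eventuallyEq.symm

lemma tendsto_radQuot_atBot_of_tendsto_atTop
    (hL : Tendsto (radialRatio τ f) (𝓝[<] 1) atTop) :
    Tendsto (radQuot τ f) (𝓝[<] 1) atBot :=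
  (tendsto_neg_atTop_atBot.comp (tendsto_one_add_nhdsLT_one.pos_mul_atTop two_pos hL)).congr'
    radQuot_eventuallyEq.symm

lemma not_bddBelow_dtauRate_of_tendsto_atTop (hτ : ‖τ‖ = 1)
    (hL : Tendsto (radialRatio τ f) (𝓝[<] 1) atTop) :
    ¬BddBelow (dtauRate τ f '' ball 0 1) := by
  rintro ⟨b, hb⟩
  have h := (tendsto_neg_atTop_atBot.comp (hL.const_mul_atTop two_pos)).congr'
    (dtauRate_ofReal_smul_eventuallyEq hτ).symm
  obtain ⟨r, hlt, hr⟩ := ((h.eventually_lt_atBot b).and eventually_abs_lt_one_nhdsLT).exists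
  exact hlt.not_ge (hb (mem_image_of_mem _ (ofReal_smul_mem_ball hτ hr)))

namespace RhoMonotone

lemma re_inner_ofReal_smul_le (hτ : ‖τ‖ = 1) (hf : RhoMonotone f)
    {r s : ℝ} (hr : |r| < 1) (hs : |s| < 1) :
    (r * (inner ℂ τ (f ((s : ℂ) • τ))).re + s * (inner ℂ τ (f ((r : ℂ) • τ))).re) /
        (1 - r * s) ≤
      s * (inner ℂ τ (f ((s : ℂ) • τ))).re / (1 - s ^ 2) +
        r * (inner ℂ τ (f ((r : ℂ) • τ))).re / (1 - r ^ 2) := by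
  have h := hf _ (ofReal_smul_mem_ball hτ hs) _ (ofReal_smul_mem_ball hτ hr)
  have hrs :
      (1 : ℂ) - inner ℂ ((r : ℂ) • τ) ((s : ℂ) • τ) = ((1 - r * s : ℝ) : ℂ) := by
    rw [inner_smul_left, inner_ofReal_smul_self hτ, Complex.conj_ofReal]; push_cast; ring
  have hconj (w : H) (t : ℝ) :
      inner ℂ w ((t : ℂ) • τ) = t * (starRingEnd ℂ) (inner ℂ τ w) := by
    rw [inner_smul_right, inner_conj_symm]
  rw [hrs] at h
  simpa only [one_sub_sq_norm_ofReal_smul hτ, hconj, inner_smul_left, Complex.conj_ofReal,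
    Complex.div_ofReal_re, Complex.add_re, Complex.re_ofReal_mul, Complex.conj_re] using h

lemma monotoneOn_radialRatio (hτ : ‖τ‖ = 1) (hf : RhoMonotone f) :
    MonotoneOn (radialRatio τ f) (Ioo (-1) 1) := by
  intro s hs r hr hsr
  rw [mem_Ioo, ← abs_lt] at hs hr
  rcases hsr.eq_or_lt with rfl | hsr
  · exact le_rfl
  exact div_one_sub_sq_le_div_one_sub_sq hr hs hsr (hf.re_inner_ofReal_smul_le hτ hr hs)

lemma re_div_le_add_mul_radialRatio (hτ : ‖τ‖ = 1) (hf : RhoMonotone f)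
    {x : H} (hx : x ∈ ball (0 : H) 1) {r : ℝ} (hr : |r| < 1) :
    ((r * inner ℂ τ (f x) + inner ℂ (f ((r : ℂ) • τ)) x) /
        (1 - r * inner ℂ τ x)).re ≤
      (inner ℂ x (f x)).re / (1 - ‖x‖ ^ 2) + r * radialRatio τ f r := by
  have h := hf x hx _ (ofReal_smul_mem_ball hτ hr)
  have hx' : (1 : ℂ) - (‖x‖ : ℂ) ^ 2 = ((1 - ‖x‖ ^ 2 : ℝ) : ℂ) := by push_cast; ring
  simp only [inner_smul_left, inner_smul_right, Complex.conj_ofReal] at h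
  rw [← inner_conj_symm (f ((r : ℂ) • τ)) τ, hx', one_sub_sq_norm_ofReal_smul hτ,
    Complex.add_re, Complex.div_ofReal_re, Complex.div_ofReal_re, Complex.re_ofReal_mul,
    Complex.conj_re] at h
  rwa [radialRatio, ← mul_div_assoc]

lemma neg_two_mul_le_dtauRate (hτ : ‖τ‖ = 1) (hf : RhoMonotone f)
    (hlim : Tendsto (fun r : ℝ => f ((r : ℂ) • τ)) (𝓝[<] 1) (𝓝 0)) {L : ℝ}
    (hL : Tendsto (radialRatio τ f) (𝓝[<] 1) (𝓝 L)) {x : H} (hx : x ∈ ball (0 : H) 1) :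
    -(2 * L) ≤ dtauRate τ f x := by
  have hr : Tendsto (fun r : ℝ => (r : ℂ)) (𝓝[<] 1) (𝓝 1) := by
    simpa using (Complex.continuous_ofReal.tendsto 1).mono_left nhdsWithin_le_nhds
  have hlhs : Tendsto (fun r : ℝ =>
      ((r * inner ℂ τ (f x) + inner ℂ (f ((r : ℂ) • τ)) x) / (1 - r * inner ℂ τ x)).re)
      (𝓝[<] 1) (𝓝 ((inner ℂ τ (f x) / (1 - inner ℂ τ x)).re)) := by
    have := ((hr.mul_const (inner ℂ τ (f x))).add (hlim.inner (tendsto_const_nhds (x := x)))).div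
      (tendsto_const_nhds.sub (hr.mul_const _)) (by simpa using one_sub_inner_ne_zero hτ hx)
    simpa [Function.comp_def] using (Complex.continuous_re.tendsto _).comp this
  have hrhs :
      Tendsto (fun r : ℝ => (inner ℂ x (f x)).re / (1 - ‖x‖ ^ 2) + r * radialRatio τ f r)
      (𝓝[<] 1) (𝓝 ((inner ℂ x (f x)).re / (1 - ‖x‖ ^ 2) + 1 * L)) :=
    tendsto_const_nhds.add ((tendsto_id.mono_left nhdsWithin_le_nhds).mul hL)
  have := le_of_tendsto_of_tendsto hlhs hrhs <| by
    filter_upwards [eventually_abs_lt_one_nhdsLT] with r hr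
    exact hf.re_div_le_add_mul_radialRatio hτ hx hr
  rw [dtauRate, re_inner_xstar]
  linarith

lemma isGLB_dtauRate (hτ : ‖τ‖ = 1) (hf : RhoMonotone f)
    (hlim : Tendsto (fun r : ℝ => f ((r : ℂ) • τ)) (𝓝[<] 1) (𝓝 0)) {L : ℝ}
    (hL : Tendsto (radialRatio τ f) (𝓝[<] 1) (𝓝 L)) :
    IsGLB (dtauRate τ f '' ball 0 1) (-(2 * L)) := by
  refine ⟨?_, fun b hb => ?_⟩
  · rintro _ ⟨x, hx, rfl⟩
    exact hf.neg_two_mul_le_dtauRate hτ hlim hL hx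
  refine ge_of_tendsto ((hL.const_mul 2).neg.congr' (dtauRate_ofReal_smul_eventuallyEq hτ).symm) ?_
  filter_upwards [eventually_abs_lt_one_nhdsLT] with r hr
  exact hb (mem_image_of_mem _ (ofReal_smul_mem_ball hτ hr))

end RhoMonotone

lemma hasDerivWithinAt_one_sub_sq_norm {c : ℝ → H} {v : H} {s : Set ℝ} {t : ℝ}
    (hc : HasDerivWithinAt c v s t) :
    HasDerivWithinAt (fun u => 1 - ‖c u‖ ^ 2) (-(2 * (inner ℂ (c t) v).re)) s t := by
  let _ := InnerProductSpace.rclikeToReal ℂ H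
  simpa [real_inner_eq_re_inner ℂ] using (hc.norm_sq).const_sub 1

lemma hasDerivWithinAt_dtau (hτ : ‖τ‖ = 1) {c : ℝ → H} {v : H} {s : Set ℝ} {t : ℝ}
    (hc : HasDerivWithinAt c v s t) (hct : c t ∈ ball (0 : H) 1) :
    HasDerivWithinAt (fun u => dtau τ (c u))
      (2 * (inner ℂ (xstar τ (c t)) v).re * dtau τ (c t)) s t := by
  set ζ := (1 : ℂ) - inner ℂ τ (c t)
  have hζ : ζ ≠ 0 := one_sub_inner_ne_zero hτ hct
  have hD := one_sub_sq_norm_pos hct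
  have hN : HasDerivWithinAt (fun u => ‖(1 : ℂ) - inner ℂ τ (c u)‖ ^ 2)
      (-(2 * ((starRingEnd ℂ) ζ * inner ℂ τ v).re)) s t := by
    have := (((hasDerivWithinAt_const t s τ).inner ℂ hc).const_sub 1).norm_sq
    refine this.congr_deriv ?_
    rw [Complex.inner, inner_zero_left, add_zero, neg_mul, Complex.neg_re,
      mul_comm (inner ℂ τ v)]
    ring
  have hre :
      (inner ℂ τ v / ζ).re = ((starRingEnd ℂ) ζ * inner ℂ τ v).re / ‖ζ‖ ^ 2 := by
    rw [← Complex.div_ofReal_re, ← Complex.normSq_eq_norm_sq, ← Complex.mul_conj]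
    have : (starRingEnd ℂ) ζ ≠ 0 := (map_ne_zero _).2 hζ
    congr 1
    field_simp
  have hζ' : ‖ζ‖ ≠ 0 := norm_ne_zero_iff.2 hζ
  refine (hN.div (hasDerivWithinAt_one_sub_sq_norm hc) hD.ne').congr_deriv ?_
  rw [re_inner_xstar, hre, dtau]
  field_simp
  ring

structure IsTrajectoryFamily (f : H → H) (F : ℝ → H → H) : Prop where
  map_zero : ∀ x ∈ ball (0 : H) 1, F 0 x = x
  mapsTo : ∀ t ≥ (0 : ℝ), ∀ x ∈ ball (0 : H) 1, F t x ∈ ball (0 : H) 1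
  hasDerivWithinAt : ∀ x ∈ ball (0 : H) 1, ∀ t ≥ (0 : ℝ),
    HasDerivWithinAt (fun s => F s x) (-(f (F t x))) (Ici 0) t

lemma hasDerivWithinAt_dtau_flow (hτ : ‖τ‖ = 1) (hF : IsTrajectoryFamily f F)
    {x : H} (hx : x ∈ ball (0 : H) 1) {t : ℝ} (ht : 0 ≤ t) :
    HasDerivWithinAt (fun s => dtau τ (F s x)) (-(dtauRate τ f (F t x) * dtau τ (F t x)))
      (Ici 0) t := by
  simpa [dtauRate, inner_neg_right] using
    hasDerivWithinAt_dtau hτ (hF.hasDerivWithinAt x hx t ht) (hF.mapsTo t ht x hx)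

lemma dtau_flow_le_of_mem_lowerBounds (hτ : ‖τ‖ = 1) (hF : IsTrajectoryFamily f F)
    {γ : ℝ} (hγ : γ ∈ lowerBounds (dtauRate τ f '' ball 0 1))
    {x : H} (hx : x ∈ ball (0 : H) 1) {t : ℝ} (ht : 0 ≤ t) :
    dtau τ (F t x) ≤ Real.exp (-(t * γ)) * dtau τ x := by
  have hder := fun s (hs : 0 ≤ s) => hasDerivWithinAt_dtau_flow hτ hF hx hs
  have := le_gronwallBound_of_liminf_deriv_right_le (f := fun s => dtau τ (F s x))
    (f' := fun s => -(dtauRate τ f (F s x) * dtau τ (F s x)))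
    (ε := 0) (K := -γ) (a := 0) (b := t)
    (fun s hs => (hder s hs.1).continuousWithinAt.mono Icc_subset_Ici_self)
    (fun s hs _ hr => ((hder s hs.1).mono (Ici_subset_Ici.2 hs.1)).liminf_right_slope_le hr)
    (congrArg (dtau τ) (hF.map_zero x hx)).le
    (fun s hs => by
      have hFs := hF.mapsTo s hs.1 x hx
      nlinarith [hγ (mem_image_of_mem _ hFs), dtau_pos hτ hFs])
    t ⟨ht, le_rfl⟩
  rwa [gronwallBound_ε0, sub_zero, mul_comm, neg_mul, mul_comm γ] at this

lemma mem_lowerBounds_of_dtau_flow_le (hτ : ‖τ‖ = 1) (hF : IsTrajectoryFamily f F)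
    {γ : ℝ} (hγ : ∀ x ∈ ball (0 : H) 1, ∀ t ≥ (0 : ℝ),
      dtau τ (F t x) ≤ Real.exp (-(t * γ)) * dtau τ x) :
    γ ∈ lowerBounds (dtauRate τ f '' ball 0 1) := by
  rintro _ ⟨x, hx, rfl⟩
  have hexp : HasDerivWithinAt (fun s => Real.exp (-(s * γ)) * dtau τ x) (-γ * dtau τ x)
      (Ici 0) 0 := by
    simpa using ((((hasDerivAt_id 0).mul_const γ).neg.exp).mul_const (dtau τ x)).hasDerivWithinAt
  have hgap := hexp.sub (hasDerivWithinAt_dtau_flow hτ hF hx le_rfl)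
  rw [hF.map_zero x hx] at hgap
  have := hgap.nonneg_of_isMinOn fun s (hs : 0 ≤ s) => by
    simpa [hF.map_zero x hx] using hγ x hx s hs
  nlinarith [dtau_pos hτ hx]

lemma dtau_flow_le_iff (hτ : ‖τ‖ = 1) (hF : IsTrajectoryFamily f F) (γ : ℝ) :
    (∀ x ∈ ball (0 : H) 1, ∀ t ≥ (0 : ℝ),
        dtau τ (F t x) ≤ Real.exp (-(t * γ)) * dtau τ x) ↔
      γ ∈ lowerBounds (dtauRate τ f '' ball 0 1) :=
  ⟨mem_lowerBounds_of_dtau_flow_le hτ hF,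
    fun hγ _ hx _ ht => dtau_flow_le_of_mem_lowerBounds hτ hF hγ hx ht⟩

end

theorem stmt6_general {H : Type*} [NormedAddCommGroup H] [InnerProductSpace ℂ H]
    (τ : H) (hτ : ‖τ‖ = 1) (f : H → H) (F : ℝ → H → H)
    (hmono : RhoMonotone f)
    (hlim : Tendsto (fun r : ℝ => f ((r : ℂ) • τ)) (𝓝[<] (1 : ℝ)) (𝓝 (0 : H)))
    (hF0 : ∀ x ∈ ball (0 : H) 1, F 0 x = x)
    (hFmaps : ∀ t ≥ (0 : ℝ), ∀ x ∈ ball (0 : H) 1, F t x ∈ ball (0 : H) 1)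
    (hFderiv : ∀ x ∈ ball (0 : H) 1, ∀ t ≥ (0 : ℝ),
      HasDerivWithinAt (fun s => F s x) (-(f (F t x))) (Set.Ici (0 : ℝ)) t) :
    -- (I) ↔ (II)
    ((⊥ < limsup (fun r : ℝ => ((radQuot τ f r : ℝ) : EReal)) (𝓝[<] (1 : ℝ))) ↔
        (∃ α : ℝ, Tendsto (radQuot τ f) (𝓝[<] (1 : ℝ)) (𝓝 α))) ∧
    -- (II) ↔ (III)
    ((∃ α : ℝ, Tendsto (radQuot τ f) (𝓝[<] (1 : ℝ)) (𝓝 α)) ↔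
        ⊥ < betaInf τ f) ∧
    -- (III) ↔ (IV)
    ((⊥ < betaInf τ f) ↔
        (∃ γ : ℝ, ∀ x ∈ ball (0 : H) 1, ∀ t ≥ (0 : ℝ),
          dtau τ (F t x) ≤ Real.exp (-(t * γ)) * dtau τ x)) ∧
    -- Moreover: α = β and β is the maximal γ in (IV)
    (∀ α : ℝ, Tendsto (radQuot τ f) (𝓝[<] (1 : ℝ)) (𝓝 α) →
      (α : EReal) = betaInf τ f ∧
      (∀ x ∈ ball (0 : H) 1, ∀ t ≥ (0 : ℝ),
        dtau τ (F t x) ≤ Real.exp (-(t * α)) * dtau τ x) ∧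
      (∀ γ : ℝ, (∀ x ∈ ball (0 : H) 1, ∀ t ≥ (0 : ℝ),
          dtau τ (F t x) ≤ Real.exp (-(t * γ)) * dtau τ x) → γ ≤ α)) := by
  have hIV := dtau_flow_le_iff hτ ⟨hF0, hFmaps, hFderiv⟩
  rcases (hmono.monotoneOn_radialRatio hτ).tendsto_nhdsLT_or_tendsto_atTop (by norm_num)
    with ⟨L, hL⟩ | hL
  · have hrad := tendsto_radQuot_of_tendsto_radialRatio hL
    have hglb := hmono.isGLB_dtauRate hτ hlim hL
    have hβ : betaInf τ f = (-(2 * L) : ℝ) := EReal.iInf₂_coe_eq_of_isGLB hglb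
    refine ⟨iff_of_true ?_ ⟨_, hrad⟩, iff_of_true ⟨_, hrad⟩ (hβ ▸ EReal.bot_lt_coe _),
      iff_of_true (hβ ▸ EReal.bot_lt_coe _) ⟨_, (hIV _).2 hglb.1⟩, fun α hα => ?_⟩
    · rw [(EReal.tendsto_coe.2 hrad).limsup_eq]
      exact EReal.bot_lt_coe _
    obtain rfl := tendsto_nhds_unique hα hrad
    exact ⟨hβ.symm, (hIV _).2 hglb.1, fun γ hγ => (le_isGLB_iff hglb).2 ((hIV γ).1 hγ)⟩
  · have hrad := tendsto_radQuot_atBot_of_tendsto_atTop hL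
    have hno : ¬∃ α : ℝ, Tendsto (radQuot τ f) (𝓝[<] 1) (𝓝 α) := fun ⟨α, hα⟩ =>
      not_tendsto_nhds_of_tendsto_atBot hrad α hα
    have hnb := not_bddBelow_dtauRate_of_tendsto_atTop hτ hL
    have hβ : betaInf τ f = ⊥ := EReal.iInf₂_coe_eq_bot_of_not_bddBelow hnb
    have hlimsup : limsup (fun r : ℝ => ((radQuot τ f r : ℝ) : EReal)) (𝓝[<] 1) = ⊥ :=
      (EReal.tendsto_coe_atBot.comp hrad).limsup_eq
    refine ⟨iff_of_false (by simp [hlimsup]) hno, iff_of_false hno (by simp [hβ]),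
      iff_of_false (by simp [hβ]) fun ⟨γ, hγ⟩ => hnb ⟨γ, (hIV γ).1 hγ⟩,
      fun α hα => (hno ⟨α, hα⟩).elim⟩

theorem stmt6 {H : Type*} [NormedAddCommGroup H] [InnerProductSpace ℂ H] [CompleteSpace H]
    (τ : H) (hτ : ‖τ‖ = 1) (f : H → H) (F : ℝ → H → H)
    (hmono : RhoMonotone f)
    (hlim : Tendsto (fun r : ℝ => f ((r : ℂ) • τ)) (𝓝[<] (1 : ℝ)) (𝓝 (0 : H)))
    (hF0 : ∀ x ∈ ball (0 : H) 1, F 0 x = x)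
    (hFsemigroup : ∀ t ≥ (0 : ℝ), ∀ s ≥ (0 : ℝ), ∀ x ∈ ball (0 : H) 1,
      F (t + s) x = F t (F s x))
    (hFmaps : ∀ t ≥ (0 : ℝ), ∀ x ∈ ball (0 : H) 1, F t x ∈ ball (0 : H) 1)
    (hFderiv : ∀ x ∈ ball (0 : H) 1, ∀ t ≥ (0 : ℝ),
      HasDerivWithinAt (fun s => F s x) (-(f (F t x))) (Set.Ici (0 : ℝ)) t) :
    -- (I) ↔ (II)
    ((⊥ < limsup (fun r : ℝ => ((radQuot τ f r : ℝ) : EReal)) (𝓝[<] (1 : ℝ))) ↔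
        (∃ α : ℝ, Tendsto (radQuot τ f) (𝓝[<] (1 : ℝ)) (𝓝 α))) ∧
    -- (II) ↔ (III)
    ((∃ α : ℝ, Tendsto (radQuot τ f) (𝓝[<] (1 : ℝ)) (𝓝 α)) ↔
        ⊥ < betaInf τ f) ∧
    -- (III) ↔ (IV)
    ((⊥ < betaInf τ f) ↔
        (∃ γ : ℝ, ∀ x ∈ ball (0 : H) 1, ∀ t ≥ (0 : ℝ),
          dtau τ (F t x) ≤ Real.exp (-(t * γ)) * dtau τ x)) ∧
    -- Moreover: α = β and β is the maximal γ in (IV)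
    (∀ α : ℝ, Tendsto (radQuot τ f) (𝓝[<] (1 : ℝ)) (𝓝 α) →
      (α : EReal) = betaInf τ f ∧
      (∀ x ∈ ball (0 : H) 1, ∀ t ≥ (0 : ℝ),
        dtau τ (F t x) ≤ Real.exp (-(t * α)) * dtau τ x) ∧
      (∀ γ : ℝ, (∀ x ∈ ball (0 : H) 1, ∀ t ≥ (0 : ℝ),
          dtau τ (F t x) ≤ Real.exp (-(t * γ)) * dtau τ x) → γ ≤ α)) :=
  stmt6_general τ hτ f F hmono hlim hF0 hFmaps hFderiv
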